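/- arXiv:1506.05408 — 3 statements merged into one kernel-verified Lean document; each statement's English description precedes it below -/
import Mathlib

section
/- The signature of the tensor product of two nondegenerate symmetric bilinear forms over the real numbers equals the product of their signatures: sign(B ⊗ B') = sign(B) · sign(B'). -/
open LinearMap (BilinForm)

/-- The positive index of inertia: the largest dimension of a subspace on which the form is
positive definite. -/
noncomputable def BilinForm.posIndex {V : Type*} [AddCommGroup V] [Module ℝ V]
    (B : BilinForm ℝ V) : ℕ :=
  sSup {n | ∃ W : Submodule ℝ V, Module.finrank ℝ W = n ∧ ∀ x ∈ W, x ≠ 0 → 0 < B x x}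

/-- The negative index of inertia: the largest dimension of a subspace on which the form is
negative definite. -/
noncomputable def BilinForm.negIndex {V : Type*} [AddCommGroup V] [Module ℝ V]
    (B : BilinForm ℝ V) : ℕ :=
  sSup {n | ∃ W : Submodule ℝ V, Module.finrank ℝ W = n ∧ ∀ x ∈ W, x ≠ 0 → B x x < 0}

/-- The signature of a real bilinear form: number of positive minus number of negative
eigenvalues (well-defined by Sylvester's law of inertia). -/
noncomputable def BilinForm.signature {V : Type*} [AddCommGroup V] [Module ℝ V]
    (B : BilinForm ℝ V) : ℤ :=
  (BilinForm.posIndex B : ℤ) - (BilinForm.negIndex B : ℤ)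

/-! Choose orthogonal bases `v` of `B` and `v'` of `B'`. The tensor basis `v i ⊗ v' j` is then
orthogonal for `B ⊗ B'`, with diagonal entries `B (v i) (v i) * B' (v' j) (v' j)`. By Sylvester's
law of inertia the signature of a form with an orthogonal basis is the sum of the signs of its
diagonal entries, and since the sign is multiplicative this sum over the tensor basis factors as the
product of the two sums. -/

open Module QuadraticMap

lemma ncard_pos_sub_ncard_neg_eq_sum_sign {ι α : Type*} [Fintype ι] [Zero α] [Preorder α]
    [DecidableLT α] (w : ι → α) :
    ({i | 0 < w i}.ncard : ℤ) - {i | w i < 0}.ncard = ∑ i, (SignType.sign (w i) : ℤ) := by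
  classical
  simp only [Set.ncard_eq_toFinset_card', Set.toFinset_ofPred, Finset.card_filter]
  push_cast
  rw [← Finset.sum_sub_distrib]
  refine Finset.sum_congr rfl fun i _ => ?_
  rw [sign_apply]
  split_ifs with hpos hneg <;> first | rfl | exact absurd hneg (lt_asymm hpos)

namespace LinearMap.BilinForm

variable {R M M' ι ι' : Type*} [CommSemiring R] [AddCommMonoid M] [Module R M]
  [AddCommMonoid M'] [Module R M']

lemma tmul_apply_basis_tensorProduct (B : BilinForm R M) (B' : BilinForm R M')
    (v : Basis ι R M) (v' : Basis ι' R M') (p q : ι × ι') :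
    B.tmul B' (v.tensorProduct v' p) (v.tensorProduct v' q) =
      B (v p.1) (v q.1) * B' (v' p.2) (v' q.2) := by
  simp [Basis.tensorProduct_apply', mul_comm]

lemma _root_.LinearMap.IsOrthoᵢ.tensorProduct {B : BilinForm R M} {B' : BilinForm R M'}
    {v : Basis ι R M} {v' : Basis ι' R M'} (hv : B.IsOrthoᵢ v) (hv' : B'.IsOrthoᵢ v') :
    (B.tmul B').IsOrthoᵢ (v.tensorProduct v') := by
  refine LinearMap.isOrthoᵢ_def.2 fun ⟨i, i'⟩ ⟨j, j'⟩ hne => ?_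
  rw [tmul_apply_basis_tensorProduct]
  by_cases hij : i = j
  · rw [LinearMap.isOrthoᵢ_def.1 hv' i' j' fun h => hne (by rw [hij, h]), mul_zero]
  · rw [LinearMap.isOrthoᵢ_def.1 hv i j hij, zero_mul]

end LinearMap.BilinForm

namespace BilinForm

variable {V : Type*} [AddCommGroup V] [Module ℝ V] [FiniteDimensional ℝ V]

lemma posIndex_eq_sigPos (B : BilinForm ℝ V) : posIndex B = sigPos B.toQuadraticMap := by
  rw [← (sigPos_isGreatest B.toQuadraticMap).csSup_eq, posIndex]
  simp [PosDef]

lemma negIndex_eq_sigNeg (B : BilinForm ℝ V) : negIndex B = sigNeg B.toQuadraticMap := by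
  rw [← (sigNeg_isGreatest B.toQuadraticMap).csSup_eq, negIndex]
  simp [PosDef]

lemma signature_eq_sum_sign {ι : Type*} [Fintype ι] {B : BilinForm ℝ V} (hB : LinearMap.IsSymm B)
    (v : Basis ι ℝ V) (hv : B.IsOrthoᵢ v) :
    signature B = ∑ i, (SignType.sign (B (v i) (v i)) : ℤ) := by
  have hQ : B.toQuadraticMap.Equivalent (weightedSumSquares ℝ fun i => B (v i) (v i)) := by
    have e := B.toQuadraticMap.isometryEquivBasisRepr v
    rw [basisRepr_eq_of_iIsOrtho _ _ (by rwa [associated_left_inverse _ hB.eq])] at e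
    exact ⟨e⟩
  rw [signature, posIndex_eq_sigPos, negIndex_eq_sigNeg,
    QuadraticForm.sigPos_of_equiv_weightedSumSquares hQ,
    QuadraticForm.sigNeg_of_equiv_weightedSumSquares hQ]
  exact ncard_pos_sub_ncard_neg_eq_sum_sign _

end BilinForm

open TensorProduct in
theorem signature_tmul_general {V V' : Type} [AddCommGroup V] [Module ℝ V]
    [AddCommGroup V'] [Module ℝ V'] [FiniteDimensional ℝ V] [FiniteDimensional ℝ V']
    (B : BilinForm ℝ V) (B' : BilinForm ℝ V')
    (hB : B.IsSymm) (hB' : B'.IsSymm) :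
    BilinForm.signature (LinearMap.BilinForm.tmul B B') =
      BilinForm.signature B * BilinForm.signature B' := by
  rw [LinearMap.BilinForm.isSymm_iff] at hB hB'
  obtain ⟨v, hv⟩ := LinearMap.BilinForm.exists_orthogonal_basis hB
  obtain ⟨v', hv'⟩ := LinearMap.BilinForm.exists_orthogonal_basis hB'
  rw [BilinForm.signature_eq_sum_sign (hB.tmul hB') _ (hv.tensorProduct hv'),
    BilinForm.signature_eq_sum_sign hB v hv, BilinForm.signature_eq_sum_sign hB' v' hv',
    Fintype.sum_prod_type, Finset.sum_mul_sum]
  simp only [LinearMap.BilinForm.tmul_apply_basis_tensorProduct, sign_mul, SignType.coe_mul]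

open TensorProduct in
/-- The signature of the tensor product of two nondegenerate symmetric bilinear forms over `ℝ`
equals the product of their signatures. -/
theorem signature_tmul {V V' : Type} [AddCommGroup V] [Module ℝ V]
    [AddCommGroup V'] [Module ℝ V'] [FiniteDimensional ℝ V] [FiniteDimensional ℝ V']
    (B : BilinForm ℝ V) (B' : BilinForm ℝ V')
    (hB : B.IsSymm) (hB' : B'.IsSymm) (hBnd : B.Nondegenerate) (hB'nd : B'.Nondegenerate) :
    BilinForm.signature (LinearMap.BilinForm.tmul B B') =
      BilinForm.signature B * BilinForm.signature B' :=
  signature_tmul_general B B' hB hB'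
end

section
/- Every infinite virtually cyclic group G admits a surjective homomorphism with finite kernel onto either the infinite cyclic group Z or the infinite dihedral group D∞ = Z/2 * Z/2. -/
/-!
Let `N` be the normal core of the cyclic subgroup of finite index; it is infinite cyclic and
normal, so every `g ∈ G` acts on `N` by `n ↦ n` or `n ↦ n⁻¹`, and the centralizer `C` of `N` has
index at most two. As `N` is central in `C` with finite index, the transfer `C → N`,
`c ↦ c ^ [C : N]`, is a homomorphism; its kernel is finite because `N` is torsion-free, and its
image is infinite cyclic. This gives `C ↠ ℤ` with finite kernel. If `C = G` we are done;
otherwise an element `g₀ ∉ C` inverts `N`, the map `C ↠ ℤ` is anti-equivariant under conjugation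
by `g₀`, and it extends to `G ↠ ℤ ⋊ ℤ/2 ≅ D∞` with the same kernel.
-/

open Monoid

/-- The infinite dihedral group `D∞ = ℤ/2 * ℤ/2`. -/
abbrev InfiniteDihedral : Type :=
  Coprod (Multiplicative (ZMod 2)) (Multiplicative (ZMod 2))

open Multiplicative Subgroup DihedralGroup

section InfiniteCyclic

variable {A : Type*} [Group A] [IsCyclic A] [Infinite A]

instance IsCyclic.isMulTorsionFree_of_infinite : IsMulTorsionFree A :=
  Function.Injective.isMulTorsionFree (intCyclicMulEquiv (G := A)).symm.toMonoidHom
    (intCyclicMulEquiv (G := A)).symm.injective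

theorem MulAut.forall_eq_or_forall_eq_inv_of_isCyclic (σ : MulAut A) :
    (∀ a, σ a = a) ∨ ∀ a, σ a = a⁻¹ := by
  obtain ⟨m, hm⟩ := σ.toMonoidHom.map_cyclic
  obtain ⟨m', hm'⟩ := σ.symm.toMonoidHom.map_cyclic
  obtain ⟨g, hg⟩ := IsCyclic.exists_generator (α := A)
  have hg_inf : ¬IsOfFinOrder g := by
    rw [← infinite_zpowers, show (zpowers g : Set A) = Set.univ from Set.eq_univ_of_forall hg]
    exact Set.infinite_univ
  have hmm' : m * m' = 1 := by
    refine injective_zpow_iff_not_isOfFinOrder.2 hg_inf ?_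
    have h := σ.symm_apply_apply g
    simp only [MulEquiv.coe_toMonoidHom] at hm hm'
    rwa [hm, hm', ← zpow_mul, ← zpow_one g, ← zpow_mul, one_mul] at h
  rcases Int.eq_one_or_neg_one_of_mul_eq_one hmm' with rfl | rfl
  · exact .inl fun a => by simpa using hm a
  · exact .inr fun a => by simpa using hm a

end InfiniteCyclic

theorem Subgroup.infinite_of_finiteIndex {G : Type*} [Group G] [Infinite G] (H : Subgroup G)
    [H.FiniteIndex] : Infinite H := by
  by_contra h
  rw [not_infinite_iff_finite] at h
  have := Finite.of_subgroup_quotient H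
  exact not_finite G

namespace MonoidHom

variable {G B : Type*} [Group G] [Group B]

theorem infinite_range_of_finite_ker [Infinite G] (χ : G →* B) [Finite χ.ker] :
    Infinite χ.range := by
  by_contra h
  rw [not_infinite_iff_finite] at h
  have : Finite (G ⧸ χ.ker) := .of_equiv _ (QuotientGroup.quotientKerEquivRange χ).symm.toEquiv
  have := Finite.of_subgroup_quotient χ.ker
  exact not_finite G

theorem exists_surjective_int_ker_eq [IsCyclic B] (χ : G →* B) [Infinite χ.range] :
    ∃ f : G →* Multiplicative ℤ, Function.Surjective f ∧ f.ker = χ.ker :=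
  ⟨((intCyclicMulEquiv (G := χ.range)).symm : χ.range →* _).comp χ.rangeRestrict,
    intCyclicMulEquiv.symm.surjective.comp χ.rangeRestrict_surjective,
    by rw [ker_mulEquiv_comp, ker_rangeRestrict]⟩

theorem map_eq_inv_of_ker_eq {H : Type*} [Group H] {f : G →* H} {χ : G →* B}
    (hker : f.ker = χ.ker) {x y : G} (h : χ x = (χ y)⁻¹) : f x = (f y)⁻¹ := by
  have hxy : x * y ∈ χ.ker := by rw [mem_ker, map_mul, h, inv_mul_cancel]
  rw [← hker, mem_ker, map_mul] at hxy
  exact eq_inv_of_mul_eq_one_left hxy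

end MonoidHom

section PowIndex

variable {G : Type*} [Group G] {A : Subgroup G}

theorem conj_eq_self_of_le_center (hA : A ≤ center G) {x g : G} (h : g⁻¹ * x * g ∈ A) :
    g⁻¹ * x * g = x :=
  calc g⁻¹ * x * g = g * (g⁻¹ * x * g) * g⁻¹ := by
        rw [mem_center_iff.1 (hA h) g, mul_inv_cancel_right]
    _ = x := by group

variable (hA : A ≤ center G) [A.FiniteIndex]

open scoped IsMulCommutative in
theorem transfer_inclusion_eq_pow (g : G) :
    (MonoidHom.transfer (inclusion hA) g : G) = g ^ A.index := by
  rw [MonoidHom.transfer_eq_pow (inclusion hA) g fun _ _ => conj_eq_self_of_le_center hA]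
  rfl

open scoped IsMulCommutative in
noncomputable def powIndexHom : G →* A where
  toFun g := ⟨g ^ A.index,
    MonoidHom.transfer_eq_pow_aux g fun _ _ => conj_eq_self_of_le_center hA⟩
  map_one' := Subtype.ext (one_pow _)
  map_mul' a b := Subtype.ext <| by
    simp only [coe_mul, ← transfer_inclusion_eq_pow hA, map_mul]

@[simp]
theorem coe_powIndexHom (g : G) : (powIndexHom hA g : G) = g ^ A.index := rfl

theorem finite_ker_powIndexHom [IsMulTorsionFree A] : Finite (powIndexHom hA).ker := by
  refine Finite.of_injective (fun x => (x : G ⧸ A)) fun x y hxy => ?_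
  obtain ⟨a, ha, hya⟩ : ∃ a ∈ A, (y : G) = x * a :=
    ⟨_, QuotientGroup.eq.1 hxy, (mul_inv_cancel_left _ _).symm⟩
  have hx : (x : G) ^ A.index = 1 := by simpa using congrArg Subtype.val x.2
  have hy : (y : G) ^ A.index = 1 := by simpa using congrArg Subtype.val y.2
  rw [hya, Commute.mul_pow (mem_center_iff.1 (hA ha) x), hx, one_mul] at hy
  have ha1 : (⟨a, ha⟩ : A) = 1 :=
    (pow_eq_one_iff_left FiniteIndex.index_ne_zero).1 (Subtype.ext (by simpa using hy))
  ext
  rw [hya, show a = 1 from congrArg Subtype.val ha1, mul_one]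

theorem exists_surjective_int_ker_eq_powIndexHom [Infinite G] [IsCyclic A] [Infinite A] :
    ∃ f : G →* Multiplicative ℤ, Function.Surjective f ∧ f.ker = (powIndexHom hA).ker := by
  have := finite_ker_powIndexHom hA
  have := (powIndexHom hA).infinite_range_of_finite_ker
  exact (powIndexHom hA).exists_surjective_int_ker_eq

end PowIndex

section ZModHom

variable {M : Type*} [Group M] {n : ℕ}

def zmodPowersHom (n : ℕ) (t : M) (ht : t ^ n = 1) : Multiplicative (ZMod n) →* M :=
  AddMonoidHom.toMultiplicativeLeft <| ZMod.lift n
    ⟨zmultiplesHom (Additive M) (Additive.ofMul t), by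
      simp only [zmultiplesHom_apply, natCast_zsmul, ← ofMul_pow, ht, ofMul_one]⟩

@[simp]
theorem zmodPowersHom_ofAdd_intCast (t : M) (ht : t ^ n = 1) (k : ℤ) :
    zmodPowersHom n t ht (ofAdd k) = t ^ k := by
  simp [zmodPowersHom]

@[simp]
theorem zmodPowersHom_ofAdd_one (t : M) (ht : t ^ n = 1) : zmodPowersHom n t ht (ofAdd 1) = t := by
  simpa using zmodPowersHom_ofAdd_intCast t ht 1

theorem MonoidHom.ext_mzmod {f g : Multiplicative (ZMod n) →* M}
    (h : f (ofAdd 1) = g (ofAdd 1)) : f = g := by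
  refine MonoidHom.ext fun x => ?_
  have hx : x = ofAdd 1 ^ ((toAdd x).cast : ℤ) := by
    rw [← ofAdd_zsmul, zsmul_one, ZMod.intCast_zmod_cast, ofAdd_toAdd]
  rw [hx, map_zpow, map_zpow, h]

end ZModHom

namespace DihedralGroup

variable {M : Type*} [Group M] {n : ℕ}

theorem hom_ext {f g : DihedralGroup n →* M} (hr : f (r 1) = g (r 1)) (hs : f (sr 0) = g (sr 0)) :
    f = g := by
  have hr' (i : ZMod n) : f (r i) = g (r i) := by
    rw [← ZMod.intCast_zmod_cast i, ← r_one_zpow, map_zpow, map_zpow, hr]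
  refine MonoidHom.ext fun
    | r i => hr' i
    | sr i => by rw [← zero_add i, ← sr_mul_r, map_mul, map_mul, hs, hr']

theorem zmodPowersHom_mul_eq_mul_inv {s t : M} (ht : t ^ n = 1) (hs : s * s = 1)
    (hst : s * t * s⁻¹ = t⁻¹) (x : Multiplicative (ZMod n)) :
    zmodPowersHom n t ht x * s = s * zmodPowersHom n t ht x⁻¹ := by
  have hconj : (MulAut.conj s).toMonoidHom.comp (zmodPowersHom n t ht) =
      (zmodPowersHom n t ht).comp invMonoidHom :=
    MonoidHom.ext_mzmod <| by simpa using hst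
  have h := DFunLike.congr_fun hconj x⁻¹
  simp only [MonoidHom.comp_apply, MulEquiv.coe_toMonoidHom, MulAut.conj_apply,
    invMonoidHom_apply, inv_inv] at h
  rw [← h, inv_eq_of_mul_eq_one_right hs, mul_assoc _ s, hs, mul_one]

def lift (s t : M) (hs : s * s = 1) (ht : t ^ n = 1) (hst : s * t * s⁻¹ = t⁻¹) :
    DihedralGroup n →* M where
  toFun
    | r i => zmodPowersHom n t ht (ofAdd i)
    | sr i => s * zmodPowersHom n t ht (ofAdd i)
  map_one' := by rw [one_def]; exact map_one _
  map_mul' := by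
    have key := zmodPowersHom_mul_eq_mul_inv ht hs hst
    rintro (i | i) (j | j)
    · simp only [r_mul_r, ofAdd_add, map_mul]
    · simp only [r_mul_sr]
      rw [← mul_assoc, key, mul_assoc, ← map_mul, ← ofAdd_neg, ← ofAdd_add, neg_add_eq_sub]
    · simp only [sr_mul_r, ofAdd_add, map_mul, mul_assoc]
    · simp only [sr_mul_sr]
      rw [mul_assoc, ← mul_assoc _ s, key, ← mul_assoc, ← mul_assoc s s, hs, one_mul, ← map_mul,
        ← ofAdd_neg, ← ofAdd_add, neg_add_eq_sub]

@[simp]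
theorem lift_r (s t : M) (hs : s * s = 1) (ht : t ^ n = 1) (hst : s * t * s⁻¹ = t⁻¹)
    (i : ZMod n) : lift s t hs ht hst (r i) = zmodPowersHom n t ht (ofAdd i) := rfl

@[simp]
theorem lift_sr (s t : M) (hs : s * s = 1) (ht : t ^ n = 1) (hst : s * t * s⁻¹ = t⁻¹)
    (i : ZMod n) : lift s t hs ht hst (sr i) = s * zmodPowersHom n t ht (ofAdd i) := rfl

end DihedralGroup

namespace InfiniteDihedral

theorem ofAdd_one_mul_self : (ofAdd 1 : Multiplicative (ZMod 2)) * ofAdd 1 = 1 := by decide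

def a : InfiniteDihedral := Coprod.inl (ofAdd 1)

def b : InfiniteDihedral := Coprod.inr (ofAdd 1)

theorem a_mul_self : a * a = 1 := by rw [a, ← map_mul, ofAdd_one_mul_self, map_one]

theorem b_mul_self : b * b = 1 := by rw [b, ← map_mul, ofAdd_one_mul_self, map_one]

def toDihedralGroup : InfiniteDihedral →* DihedralGroup 0 :=
  Coprod.lift (zmodPowersHom 2 (sr 0) (by rw [sq, sr_mul_self]))
    (zmodPowersHom 2 (sr 1) (by rw [sq, sr_mul_self]))

def ofDihedralGroup : DihedralGroup 0 →* InfiniteDihedral :=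
  DihedralGroup.lift a (a * b) a_mul_self (pow_zero _) <| by
    rw [inv_eq_of_mul_eq_one_right a_mul_self, mul_inv_rev, inv_eq_of_mul_eq_one_right a_mul_self,
      inv_eq_of_mul_eq_one_right b_mul_self, ← mul_assoc, a_mul_self, one_mul]

def mulEquivDihedralGroup : InfiniteDihedral ≃* DihedralGroup 0 :=
  toDihedralGroup.toMulEquiv ofDihedralGroup
    (Coprod.hom_ext (MonoidHom.ext_mzmod (by simp [toDihedralGroup, ofDihedralGroup, a]))
      (MonoidHom.ext_mzmod
        (by simp [toDihedralGroup, ofDihedralGroup, ← mul_assoc, a_mul_self, b])))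
    (DihedralGroup.hom_ext (by simp [toDihedralGroup, ofDihedralGroup, a, b])
      (by simp [toDihedralGroup, ofDihedralGroup, a]))

end InfiniteDihedral
section DihedralLift

variable {G : Type*} [Group G] {C : Subgroup G} [C.Normal]
  (hC : ∀ a b, a ∉ C → b ∉ C → a * b ∈ C) {g₀ : G} (hg₀ : g₀ ∉ C)
  (k : C →* Multiplicative ℤ) (hconj : ∀ c, k (MulAut.conjNormal g₀ c) = (k c)⁻¹)
  (hsq : k ⟨g₀ * g₀, hC _ _ hg₀ hg₀⟩ = 1)

-- `ZMod 0` unfolds to `ℤ`, but the `DihedralGroup` lemmas only fire on genuine `ZMod 0` terms,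
-- hence the explicit casts.
open scoped Classical in
noncomputable def dihedralLift : G →* DihedralGroup 0 where
  toFun g := if h : g ∈ C then r (Int.cast (k ⟨g, h⟩).toAdd)
    else sr (-Int.cast (k ⟨g * g₀⁻¹, hC _ _ h (inv_mem_iff.not.2 hg₀)⟩).toAdd)
  map_one' := by
    rw [dif_pos C.one_mem, show k ⟨1, _⟩ = 1 from map_one k]
    rfl
  map_mul' a b := by
    have hinv : g₀⁻¹ ∉ C := inv_mem_iff.not.2 hg₀
    by_cases ha : a ∈ C <;> by_cases hb : b ∈ C
    · simp only [dif_pos ha, dif_pos hb, dif_pos (mul_mem ha hb), r_mul_r,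
        show k ⟨a * b, _⟩ = k ⟨a, ha⟩ * k ⟨b, hb⟩ from map_mul k ⟨a, ha⟩ ⟨b, hb⟩, toAdd_mul,
        Int.cast_add]
    · have hab : a * b ∉ C := (mul_mem_cancel_left ha).not.2 hb
      have e : k ⟨a * b * g₀⁻¹, hC _ _ hab hinv⟩ = k ⟨a, ha⟩ * k ⟨b * g₀⁻¹, hC _ _ hb hinv⟩ := by
        rw [← map_mul]
        exact congrArg k (Subtype.ext (mul_assoc _ _ _))
      simp only [dif_pos ha, dif_neg hb, dif_neg hab, r_mul_sr, e, toAdd_mul, Int.cast_add]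
      congr 1; ring
    · have hab : a * b ∉ C := (mul_mem_cancel_right hb).not.2 ha
      have e : k ⟨a * b * g₀⁻¹, hC _ _ hab hinv⟩ =
          k ⟨a * g₀⁻¹, hC _ _ ha hinv⟩ * (k ⟨b, hb⟩)⁻¹ := by
        rw [← hconj, ← map_mul]
        exact congrArg k (Subtype.ext (by simp [MulAut.conjNormal_apply, mul_assoc]))
      simp only [dif_neg ha, dif_pos hb, dif_neg hab, sr_mul_r, e, toAdd_mul, toAdd_inv,
        Int.cast_add, Int.cast_neg]
      congr 1; ring
    · have hbg : b * g₀⁻¹ ∈ C := hC _ _ hb hinv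
      have e : k ⟨a * b, hC _ _ ha hb⟩ =
          k ⟨a * g₀⁻¹, hC _ _ ha hinv⟩ * (k ⟨b * g₀⁻¹, hbg⟩)⁻¹ := by
        rw [← hconj, ← mul_one (k _ * k _), ← hsq, ← map_mul, ← map_mul]
        exact congrArg k (Subtype.ext (by simp [MulAut.conjNormal_apply, mul_assoc]))
      simp only [dif_neg ha, dif_neg hb, dif_pos (hC _ _ ha hb), sr_mul_sr, e, toAdd_mul,
        toAdd_inv, Int.cast_add, Int.cast_neg]
      congr 1; ring

theorem dihedralLift_apply_of_mem {g : G} (h : g ∈ C) :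
    dihedralLift hC hg₀ k hconj hsq g = r (Int.cast (k ⟨g, h⟩).toAdd) :=
  dif_pos h

theorem dihedralLift_apply_of_notMem {g : G} (h : g ∉ C) :
    dihedralLift hC hg₀ k hconj hsq g =
      sr (-Int.cast (k ⟨g * g₀⁻¹, hC _ _ h (inv_mem_iff.not.2 hg₀)⟩).toAdd) :=
  dif_neg h

theorem dihedralLift_surjective (hk : Function.Surjective k) :
    Function.Surjective (dihedralLift hC hg₀ k hconj hsq) := by
  rintro (i | i)
  · obtain ⟨c, hc⟩ := hk (ofAdd (ZMod.cast i))
    refine ⟨c, ?_⟩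
    rw [dihedralLift_apply_of_mem _ _ _ _ _ c.2, hc, toAdd_ofAdd, ZMod.intCast_zmod_cast]
  · obtain ⟨c, hc⟩ := hk (ofAdd (-ZMod.cast i))
    have hcg : (c : G) * g₀ ∉ C := (mul_mem_cancel_left c.2).not.2 hg₀
    refine ⟨c * g₀, ?_⟩
    rw [dihedralLift_apply_of_notMem _ _ _ _ _ hcg]
    simp_rw [mul_inv_cancel_right, hc, toAdd_ofAdd, Int.cast_neg, neg_neg, ZMod.intCast_zmod_cast]

theorem ker_dihedralLift : (dihedralLift hC hg₀ k hconj hsq).ker = k.ker.map C.subtype := by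
  ext g
  rw [MonoidHom.mem_ker, mem_map]
  by_cases h : g ∈ C
  · rw [dihedralLift_apply_of_mem _ _ _ _ _ h, one_def, r.injEq, Int.cast_eq_zero, toAdd_eq_zero]
    exact ⟨fun hg => ⟨⟨g, h⟩, hg, rfl⟩, by rintro ⟨x, hx, rfl⟩; exact hx⟩
  · rw [dihedralLift_apply_of_notMem _ _ _ _ _ h]
    exact iff_of_false nofun fun ⟨x, _, hx⟩ => h (hx ▸ x.2)

theorem finite_ker_dihedralLift [Finite k.ker] : Finite (dihedralLift hC hg₀ k hconj hsq).ker := by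
  rw [ker_dihedralLift, ← SetLike.coe_sort_coe, coe_map]
  infer_instance

end DihedralLift

theorem subgroupOf_centralizer_le_center {G : Type*} [Group G] (N : Subgroup G) :
    N.subgroupOf (centralizer (N : Set G)) ≤ center (centralizer (N : Set G)) := fun _ hx =>
  mem_center_iff.2 fun y => Subtype.ext (mem_centralizer_iff.1 y.2 _ (mem_subgroupOf.1 hx)).symm

theorem eq_one_of_commute_of_conj_eq_inv {G : Type*} [Group G] {N : Subgroup G}
    [IsMulTorsionFree N] {g x : G} (hinv : ∀ n ∈ N, g * n * g⁻¹ = n⁻¹) (hx : x ∈ N)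
    (hcomm : Commute g x) : x = 1 := by
  have hxx : x * x = 1 := by
    nth_rewrite 1 [← inv_inv x, ← hinv x hx, hcomm.eq, mul_inv_cancel_right]
    exact inv_mul_cancel x
  have : (⟨x, hx⟩ : N) ^ 2 = 1 := Subtype.ext (by simpa [sq] using hxx)
  simpa using congrArg Subtype.val (sq_eq_one.1 this)

section NormalInfiniteCyclic

variable {G : Type*} [Group G] (N : Subgroup G) [N.Normal] [IsCyclic N] [Infinite N]

theorem mem_centralizer_or_conj_eq_inv (g : G) :
    g ∈ centralizer (N : Set G) ∨ ∀ n ∈ N, g * n * g⁻¹ = n⁻¹ := by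
  refine (MulAut.forall_eq_or_forall_eq_inv_of_isCyclic (MulAut.conjNormal (H := N) g)).imp
    (fun h => mem_centralizer_iff.2 fun n hn => ?_) (fun h n hn => ?_)
  · have hn' : g * n * g⁻¹ = n := by simpa using congrArg Subtype.val (h ⟨n, hn⟩)
    calc n * g = g * n * g⁻¹ * g := by rw [hn']
      _ = g * n := inv_mul_cancel_right _ _
  · simpa using congrArg Subtype.val (h ⟨n, hn⟩)

theorem mul_mem_centralizer_of_notMem {a b : G} (ha : a ∉ centralizer (N : Set G))
    (hb : b ∉ centralizer (N : Set G)) : a * b ∈ centralizer (N : Set G) := by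
  have ha' := (mem_centralizer_or_conj_eq_inv N a).resolve_left ha
  have hb' := (mem_centralizer_or_conj_eq_inv N b).resolve_left hb
  refine mem_centralizer_iff.2 fun n hn => ?_
  calc n * (a * b) = a * n⁻¹ * a⁻¹ * (a * b) := by rw [ha' _ (inv_mem hn), inv_inv]
    _ = a * (b * n * b⁻¹) * b := by rw [hb' n hn]; group
    _ = a * b * n := by group

theorem exists_surjective_infiniteDihedral_of_not_le_center [Infinite G] [N.FiniteIndex]
    (hN : ¬N ≤ center G) :
    ∃ f : G →* InfiniteDihedral, Function.Surjective f ∧ Finite f.ker := by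
  set C := centralizer (N : Set G)
  obtain ⟨g₀, hg₀⟩ : ∃ g₀, g₀ ∉ C := by
    by_contra! h
    exact hN fun n hn => mem_center_iff.2 fun g => (mem_centralizer_iff.1 (h g) n hn).symm
  have hinv := (mem_centralizer_or_conj_eq_inv N g₀).resolve_left hg₀
  have hNC : N ≤ C := le_centralizer_iff_isMulCommutative.2 inferInstance
  let e : N.subgroupOf C ≃* N := subgroupOfEquivOfLe hNC
  have : C.FiniteIndex := finiteIndex_of_le hNC
  have : Infinite C := C.infinite_of_finiteIndex
  have : IsCyclic (N.subgroupOf C) := isCyclic_of_surjective e.symm.toMonoidHom e.symm.surjective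
  have : Infinite (N.subgroupOf C) := .of_injective _ e.symm.injective
  have hA := subgroupOf_centralizer_le_center N
  obtain ⟨k, hk, hker⟩ := exists_surjective_int_ker_eq_powIndexHom hA
  have hpow (c : C) : (c : G) ^ (N.subgroupOf C).index ∈ N := by
    simpa using mem_subgroupOf.1 (powIndexHom hA c).2
  have hconj (c : C) : k (MulAut.conjNormal g₀ c) = (k c)⁻¹ :=
    MonoidHom.map_eq_inv_of_ker_eq hker <| Subtype.ext <| Subtype.ext <| by
      simpa [MulAut.conjNormal_apply, conj_pow] using hinv _ (hpow c)
  have hsq : k ⟨g₀ * g₀, mul_mem_centralizer_of_notMem N hg₀ hg₀⟩ = 1 := by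
    rw [← MonoidHom.mem_ker, hker, MonoidHom.mem_ker]
    refine Subtype.ext <| Subtype.ext <| eq_one_of_commute_of_conj_eq_inv hinv (hpow _) ?_
    exact ((Commute.refl g₀).mul_right (Commute.refl g₀)).pow_right _
  have : Finite k.ker := hker ▸ finite_ker_powIndexHom hA
  refine ⟨(InfiniteDihedral.mulEquivDihedralGroup.symm : DihedralGroup 0 →* _).comp
    (dihedralLift (fun _ _ => mul_mem_centralizer_of_notMem N) hg₀ k hconj hsq), ?_, ?_⟩
  · exact InfiniteDihedral.mulEquivDihedralGroup.symm.surjective.comp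
      (dihedralLift_surjective _ _ _ _ _ hk)
  · rw [MonoidHom.ker_mulEquiv_comp]
    exact finite_ker_dihedralLift _ _ _ _ _

theorem exists_surjective_int_or_infiniteDihedral_of_normal [Infinite G] [N.FiniteIndex] :
    (∃ f : G →* Multiplicative ℤ, Function.Surjective f ∧ Finite f.ker) ∨
    (∃ f : G →* InfiniteDihedral, Function.Surjective f ∧ Finite f.ker) := by
  by_cases hN : N ≤ center G
  · obtain ⟨f, hf, hker⟩ := exists_surjective_int_ker_eq_powIndexHom hN
    exact .inl ⟨f, hf, hker ▸ finite_ker_powIndexHom hN⟩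
  · exact .inr (exists_surjective_infiniteDihedral_of_not_le_center N hN)

end NormalInfiniteCyclic

/-- Every infinite virtually cyclic group `G` (i.e. containing a cyclic subgroup of finite
index) admits a surjective homomorphism with finite kernel onto either the infinite cyclic
group `ℤ` or the infinite dihedral group `D∞ = ℤ/2 * ℤ/2`. -/
theorem infinite_virtually_cyclic_structure (G : Type) [Group G] [Infinite G]
    (hvc : ∃ H : Subgroup G, IsCyclic H ∧ H.index ≠ 0) :
    (∃ f : G →* Multiplicative ℤ, Function.Surjective f ∧ Finite f.ker) ∨
    (∃ f : G →* InfiniteDihedral, Function.Surjective f ∧ Finite f.ker) := by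
  obtain ⟨H, hH, hindex⟩ := hvc
  have : H.FiniteIndex := ⟨hindex⟩
  have : IsCyclic H.normalCore := isCyclic_of_le H.normalCore_le
  have : Infinite H.normalCore := H.normalCore.infinite_of_finiteIndex
  exact exists_surjective_int_or_infiniteDihedral_of_normal H.normalCore
end

section
/- The group of units of the group ring Z[Z/4] that are of the form ±g for g in Z/4 exhausts all units of Z[Z/4] of finite order, but Z[Z/5] contains a unit of infinite order (e.g., 1 − g − g⁴ + ... arising from the golden ratio unit in Z[ζ_5]), witnessing that K_1(Z[Z/5]) is strictly larger than its trivial units. -/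
/-!
A unit of `ℤ[ℤ/4]` stays a unit under the three characters sending the generator to `1`, `-1`
and `i`, with values in `ℤ`, `ℤ` and `ℤ[i]`. For the coefficients `a, b, c, d` this says
`a + b + c + d = ±1`, `a - b + c - d = ±1` and `(a - c)² + (b - d)² = 1`, which leaves only the
eight trivial units; so every unit of `ℤ[ℤ/4]` is trivial, whatever its order.

In `ℤ[ℤ/5]` with generator `g`, `-1 + g + g⁴` is a unit with inverse `-1 + g² + g³`. Sending `g`
to a primitive fifth root of unity maps it to a root `z` of `z² + 3z + 1`, and such a `z` is not a
root of unity: `‖z‖ = 1` together with `z (z + 3) = -1` would give `3 = ‖(z + 3) - z‖ ≤ 2`.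
-/

open MonoidAlgebra Multiplicative

def zmodPowHom (n : ℕ) [NeZero n] {M : Type*} [Monoid M] (r : M) (hr : r ^ n = 1) :
    Multiplicative (ZMod n) →* M where
  toFun x := r ^ (toAdd x).val
  map_one' := by simp
  map_mul' a b := by
    simp only [toAdd_mul, ZMod.val_add, ← pow_add]
    exact (pow_eq_pow_mod _ hr).symm

noncomputable def cyclicEval (n : ℕ) [NeZero n] {R : Type*} [Ring R] (r : R) (hr : r ^ n = 1) :
    MonoidAlgebra ℤ (Multiplicative (ZMod n)) →ₐ[ℤ] R :=
  MonoidAlgebra.lift ℤ R _ (zmodPowHom n r hr)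

section cyclicEval

variable {n : ℕ} [NeZero n] {R : Type*} [Ring R] (r : R) (hr : r ^ n = 1)

theorem cyclicEval_of_ofAdd_one (hn : n ≠ 1) : cyclicEval n r hr (of ℤ _ (ofAdd 1)) = r := by
  simp [cyclicEval, zmodPowHom, ZMod.val_one'' hn]

theorem cyclicEval_eq_sum (x : MonoidAlgebra ℤ (Multiplicative (ZMod n))) :
    cyclicEval n r hr x = ∑ k : ZMod n, x.coeff (ofAdd k) * r ^ k.val := by
  rw [cyclicEval, lift_apply, Finsupp.sum_fintype _ _ (by simp)]
  exact Fintype.sum_equiv toAdd _ _ fun g => by simp [zmodPowHom, zsmul_eq_mul]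

end cyclicEval

theorem cyclicEval_four {R : Type*} [Ring R] (r : R) (hr : r ^ 4 = 1)
    (x : MonoidAlgebra ℤ (Multiplicative (ZMod 4))) :
    cyclicEval 4 r hr x = x.coeff (ofAdd 0) + x.coeff (ofAdd 1) * r + x.coeff (ofAdd 2) * r ^ 2
      + x.coeff (ofAdd 3) * r ^ 3 := by
  have h1 : (1 : ZMod 4).val = 1 := rfl
  have h2 : (2 : ZMod 4).val = 2 := rfl
  have h3 : (3 : ZMod 4).val = 3 := rfl
  rw [cyclicEval_eq_sum, show (Finset.univ : Finset (ZMod 4)) = {0, 1, 2, 3} from rfl,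
    Finset.sum_insert (by decide), Finset.sum_insert (by decide), Finset.sum_insert (by decide),
    Finset.sum_singleton]
  simp [h1, h2, h3, add_assoc]

theorem of_ofAdd_one_pow_eq_one (n : ℕ) :
    of ℤ (Multiplicative (ZMod n)) (ofAdd 1) ^ n = 1 := by
  rw [← map_pow, ← ofAdd_nsmul, nsmul_one, ZMod.natCast_self, ofAdd_zero, map_one]

theorem eq_single_ofAdd_of_coeff_eq_piSingle {A R : Type*} [DecidableEq A] [Semiring R]
    {x : MonoidAlgebra R (Multiplicative A)} {a : A} {r : R}
    (h : (fun b => x.coeff (ofAdd b)) = Pi.single a r) : x = single (ofAdd a) r := by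
  refine coeff_injective <| Finsupp.ext fun g => ?_
  obtain ⟨b, rfl⟩ := ofAdd.surjective g
  simpa [Finsupp.single_apply, Pi.single_apply, eq_comm] using congrFun h b

theorem GaussianInt.sq_add_sq_eq_one_of_isUnit {p q : ℤ} (h : IsUnit (⟨p, q⟩ : GaussianInt)) :
    p ^ 2 + q ^ 2 = 1 := by
  rw [← Zsqrtd.norm_eq_one_iff' (by norm_num), Zsqrtd.norm_def] at h
  linear_combination h

theorem exists_eq_piSingle_of_isUnit_of_sq_add_sq {f : ZMod 4 → ℤ}
    (h₁ : IsUnit (f 0 + f 1 + f 2 + f 3)) (hneg : IsUnit (f 0 - f 1 + f 2 - f 3))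
    (hi : (f 0 - f 2) ^ 2 + (f 1 - f 3) ^ 2 = 1) :
    ∃ k, ∃ ε : ℤˣ, f = Pi.single k (ε : ℤ) := by
  have hf : f = ![f 0, f 1, f 2, f 3] := by funext j; fin_cases j <;> rfl
  rw [Int.isUnit_iff] at h₁ hneg
  rw [hf]
  -- `ZMod 4` unfolds to `Fin 4`, so the goal becomes decidable once `a, b, c, d` are numerals.
  show ∃ k : Fin 4, ∃ ε : ℤˣ, ![f 0, f 1, f 2, f 3] = Pi.single k (ε : ℤ)
  generalize f 0 = a, f 1 = b, f 2 = c, f 3 = d at h₁ hneg hi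
  obtain ⟨hp₁, hp₂⟩ : -1 ≤ a - c ∧ a - c ≤ 1 := by
    rw [← abs_le, ← sq_le_one_iff_abs_le_one]; nlinarith [sq_nonneg (b - d)]
  obtain ⟨hq₁, hq₂⟩ : -1 ≤ b - d ∧ b - d ≤ 1 := by
    rw [← abs_le, ← sq_le_one_iff_abs_le_one]; nlinarith [sq_nonneg (a - c)]
  obtain ⟨ha₁, ha₂, hb₁, hb₂, hc₁, hc₂, hd₁, hd₂⟩ :
      -1 ≤ a ∧ a ≤ 1 ∧ -1 ≤ b ∧ b ≤ 1 ∧ -1 ≤ c ∧ c ≤ 1 ∧ -1 ≤ d ∧ d ≤ 1 := by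
    omega
  interval_cases a <;> interval_cases b <;> interval_cases c <;> interval_cases d <;>
    first | decide | (exfalso; revert h₁ hneg hi; decide)

theorem units_zmod_four_eq_single_or_neg_single
    (u : (MonoidAlgebra ℤ (Multiplicative (ZMod 4)))ˣ) :
    ∃ g, (u : MonoidAlgebra ℤ (Multiplicative (ZMod 4))) = single g 1 ∨
      (u : MonoidAlgebra ℤ (Multiplicative (ZMod 4))) = -single g 1 := by
  set f : ZMod 4 → ℤ := fun k => (u : MonoidAlgebra ℤ (Multiplicative (ZMod 4))).coeff (ofAdd k)
  have h₁ : IsUnit (f 0 + f 1 + f 2 + f 3) := by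
    simpa [f, cyclicEval_four] using u.isUnit.map (cyclicEval 4 (1 : ℤ) (one_pow 4))
  have hneg : IsUnit (f 0 - f 1 + f 2 - f 3) := by
    convert u.isUnit.map (cyclicEval 4 (-1 : ℤ) (by norm_num)) using 1
    rw [cyclicEval_four]; push_cast; ring
  have hi : (f 0 - f 2) ^ 2 + (f 1 - f 3) ^ 2 = 1 := by
    refine GaussianInt.sq_add_sq_eq_one_of_isUnit ?_
    convert u.isUnit.map (cyclicEval 4 (⟨0, 1⟩ : GaussianInt) (by decide)) using 1
    rw [cyclicEval_four]; ext <;> simp [f, pow_succ, sub_eq_add_neg]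
  obtain ⟨k, ε, hk⟩ := exists_eq_piSingle_of_isUnit_of_sq_add_sq h₁ hneg hi
  refine ⟨ofAdd k, ?_⟩
  rw [eq_single_ofAdd_of_coeff_eq_piSingle hk]
  rcases Int.units_eq_one_or ε with rfl | rfl
  · exact .inl rfl
  · exact .inr (single_neg _ _)

/-- At a primitive fifth root of unity `ζ ∈ ℂ` this is `-1 + 2 cos (2π/5) = (√5 - 3)/2 = -φ⁻²`,
with `φ` the golden ratio. -/
def goldenUnit {R : Type*} [CommRing R] (r : R) (hr : r ^ 5 = 1) : Rˣ where
  val := -1 + r + r ^ 4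
  inv := -1 + r ^ 2 + r ^ 3
  val_inv := by linear_combination (r + r ^ 2) * hr
  inv_val := by linear_combination (r + r ^ 2) * hr

theorem Complex.not_isOfFinOrder_of_sq_add_three_mul_add_one_eq_zero {z : ℂ}
    (hz : z ^ 2 + 3 * z + 1 = 0) : ¬IsOfFinOrder z := by
  intro hfin
  have hz1 : ‖z‖ = 1 := hfin.norm_eq_one
  have hz3 : ‖z + 3‖ = 1 := by
    have : z * (z + 3) = -1 := by linear_combination hz
    simpa [hz1] using congrArg norm this
  have : ‖(z + 3) - z‖ ≤ ‖z + 3‖ + ‖z‖ := norm_sub_le _ _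
  norm_num [hz1, hz3] at this

theorem IsPrimitiveRoot.goldenUnit_sq_add_three_mul_add_one {ζ : ℂ} (hζ : IsPrimitiveRoot ζ 5) :
    (goldenUnit ζ hζ.pow_eq_one : ℂ) ^ 2 + 3 * goldenUnit ζ hζ.pow_eq_one + 1 = 0 := by
  have hsum := hζ.geom_sum_eq_zero (by norm_num)
  simp only [Finset.sum_range_succ, Finset.sum_range_zero] at hsum
  simp only [goldenUnit]
  linear_combination hsum + (ζ ^ 3 + 2) * hζ.pow_eq_one

theorem not_isOfFinOrder_goldenUnit_zmod_five :
    ¬IsOfFinOrder (goldenUnit _ (of_ofAdd_one_pow_eq_one 5)) := by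
  have hζ : IsPrimitiveRoot (Complex.exp (2 * Real.pi * Complex.I / 5)) 5 :=
    Complex.isPrimitiveRoot_exp 5 (by norm_num)
  set φ := cyclicEval 5 _ hζ.pow_eq_one
  have hmap :
      Units.map φ (goldenUnit _ (of_ofAdd_one_pow_eq_one 5)) = goldenUnit _ hζ.pow_eq_one := by
    ext
    simp only [goldenUnit, Units.coe_map, MonoidHom.coe_coe, map_add, map_neg, map_one, map_pow, φ,
      cyclicEval_of_ofAdd_one _ _ (by norm_num : 5 ≠ 1)]
  intro hfin
  refine Complex.not_isOfFinOrder_of_sq_add_three_mul_add_one_eq_zero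
    hζ.goldenUnit_sq_add_three_mul_add_one ?_
  rw [← hmap]
  exact ((Units.coeHom ℂ).comp (Units.map φ.toMonoidHom)).isOfFinOrder hfin

/-- The trivial units `± g` (for `g ∈ ℤ/4`) exhaust all units of finite order of the group
ring `ℤ[ℤ/4]`, but the group ring `ℤ[ℤ/5]` contains a unit of infinite order, witnessing that
`K₁(ℤ[ℤ/5])` is strictly larger than its trivial units. -/
theorem units_int_group_ring_z4_z5 :
    (∀ u : (MonoidAlgebra ℤ (Multiplicative (ZMod 4)))ˣ, IsOfFinOrder u →
      ∃ g : Multiplicative (ZMod 4),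
        (u : MonoidAlgebra ℤ (Multiplicative (ZMod 4))) = MonoidAlgebra.single g 1 ∨
        (u : MonoidAlgebra ℤ (Multiplicative (ZMod 4))) = -MonoidAlgebra.single g 1) ∧
    ∃ v : (MonoidAlgebra ℤ (Multiplicative (ZMod 5)))ˣ, ¬IsOfFinOrder v :=
  ⟨fun u _ => units_zmod_four_eq_single_or_neg_single u, _, not_isOfFinOrder_goldenUnit_zmod_five⟩
end
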